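/- arXiv:1904.13301 — 2 statements merged into one kernel-verified Lean document; each statement's English description precedes it below -/
import Mathlib

section
/- Let {H_α⁺}_{α∈𝒜} be a finite family of closed affine halfspaces in a real inner product space V inducing a directed chamber decomposition of a polyhedron P ⊆ V, and assume the central chamber P⁺ = P ∩ ⋂_{α∈𝒜} H_α⁺ has nonempty interior. Then for every compact chamber P_J (with nonempty interior in V) distinct from the central chamber, the positive boundary ∂⁺P_J is a strong deformation retract of P_J; that is, there exists a continuous map H : [0,1] × P_J → P_J with H(0,v) = v for all v ∈ P_J, H(1,v) ∈ ∂⁺P_J for all v ∈ P_J, and H(t,w) = w for all w ∈ ∂⁺P_J and all t ∈ [0,1]. -/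
/-!
Choose `p` in the interior of the central chamber `P⁺` but outside `P_J` (possible since
`P_J ≠ P⁺`), and push every `x ∈ P_J` along the ray from `p` through `x` until the ray leaves
the compact polyhedron `P_J`. The exit point lies on a facet whose hyperplane has `p` strictly on
its inner side; because `p ∈ int P⁺`, these facets make up exactly `∂⁺P_J` (facets of `P` and
walls `H_α`, `α ∈ J`), while the walls `H_α`, `α ∉ J`, face `p`. The reciprocal of the exit
parameter is a maximum of finitely many affine functions of `x`, so the projection is continuous
and fixes `∂⁺P_J`, and the straight-line homotopy to it is the required deformation. If some
`H_α`, `α ∈ J`, is all of `V`, then `∂⁺P_J = P_J` and there is nothing to prove.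
-/

open Set RealInnerProductSpace

variable {V : Type*} [NormedAddCommGroup V] [InnerProductSpace ℝ V]
variable {A : Type*}

/-- The closed positive halfspace `H_α⁺ = {v : ⟨v, u_α⟩ ≥ b_α}`. -/
def Hplus (u : A → V) (b : A → ℝ) (α : A) : Set V := {v | b α ≤ ⟪v, u α⟫}

/-- The closed negative halfspace `H_α⁻ = {v : ⟨v, u_α⟩ ≤ b_α}`. -/
def Hminus (u : A → V) (b : A → ℝ) (α : A) : Set V := {v | ⟪v, u α⟫ ≤ b α}

/-- The separating hyperplane `H_α = {v : ⟨v, u_α⟩ = b_α}`. -/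
def Hyperplane (u : A → V) (b : A → ℝ) (α : A) : Set V := {v | ⟪v, u α⟫ = b α}

/-- The chamber `P_J = P ∩ (⋂_{α ∈ J} H_α⁺) ∩ (⋂_{α ∉ J} H_α⁻)`. -/
def chamber (P : Set V) (u : A → V) (b : A → ℝ) (J : Set A) : Set V :=
  P ∩ (⋂ α ∈ J, Hplus u b α) ∩ (⋂ α ∈ Jᶜ, Hminus u b α)

/-- The positive boundary `∂⁺P_J = P_J ∩ (∂P ∪ ⋃_{α ∈ J} H_α)`. -/
def posBoundary (P : Set V) (u : A → V) (b : A → ℝ) (J : Set A) : Set V :=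
  chamber P u b J ∩ (frontier P ∪ ⋃ α ∈ J, Hyperplane u b α)

/-- `s` is a strong deformation retract of `t`. -/
def IsStrongDeformationRetract {E : Type*} [TopologicalSpace E] (s t : Set E) : Prop :=
  ∃ H : unitInterval × E → E,
    ContinuousOn H (univ ×ˢ t) ∧ (∀ v ∈ t, H (0, v) = v) ∧
    (∀ τ : unitInterval, ∀ v ∈ t, H (τ, v) ∈ t) ∧ (∀ v ∈ t, H (1, v) ∈ s) ∧
    (∀ τ : unitInterval, ∀ w ∈ s, H (τ, w) = w)

theorem Convex.isStrongDeformationRetract {E : Type*} [TopologicalSpace E] [AddCommGroup E]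
    [Module ℝ E] [ContinuousAdd E] [ContinuousSMul ℝ E] {s t : Set E} {r : E → E}
    (ht : Convex ℝ t) (hr : ContinuousOn r t) (hrt : MapsTo r t s) (hst : s ⊆ t)
    (hrs : ∀ x ∈ s, r x = x) : IsStrongDeformationRetract s t := by
  refine ⟨fun q => (1 - (q.1 : ℝ)) • q.2 + (q.1 : ℝ) • r q.2, ?_, ?_, ?_, ?_, ?_⟩
  · have hτ : Continuous fun q : unitInterval × E => (q.1 : ℝ) := by fun_prop
    exact ((continuous_const.sub hτ).continuousOn.smul continuous_snd.continuousOn).add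
      (hτ.continuousOn.smul (hr.comp continuous_snd.continuousOn fun q hq => hq.2))
  · intro v _
    simp
  · intro τ v hv
    exact ht hv (hst (hrt hv)) (sub_nonneg.2 τ.2.2) τ.2.1 (sub_add_cancel 1 _)
  · intro v hv
    simpa using hrt hv
  · intro τ w hw
    simp only [hrs w hw, ← add_smul, sub_add_cancel, one_smul]

theorem IsCompact.eq_zero_of_forall_add_mem {s : Set V} {v : V} (hs : IsCompact s)
    (hne : s.Nonempty) (h : ∀ y ∈ s, y + v ∈ s) : v = 0 := by
  obtain ⟨y, hy, hmax⟩ :=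
    hs.exists_isMaxOn hne (by fun_prop : Continuous fun y : V => ⟪y, v⟫).continuousOn
  have hle : ⟪y + v, v⟫ ≤ ⟪y, v⟫ := hmax (h y hy)
  rw [inner_add_left, real_inner_self_eq_norm_sq] at hle
  exact norm_eq_zero.1 (pow_eq_zero_iff two_ne_zero |>.1 (by nlinarith [sq_nonneg ‖v‖]))

theorem interior_setOf_le_inner {g : V} (hg : g ≠ 0) (r : ℝ) :
    interior {v : V | r ≤ ⟪v, g⟫} = {v | r < ⟪v, g⟫} := by
  have hf : innerSL ℝ g ≠ 0 := by
    rwa [← norm_ne_zero_iff, innerSL_apply_norm, norm_ne_zero_iff]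
  have key := ((innerSL ℝ g).isOpenMap_of_ne_zero hf).preimage_interior_eq_interior_preimage
    (innerSL ℝ g).continuous (Ici r)
  simp only [interior_Ici, preimage, mem_Ici, mem_Ioi, innerSL_apply_apply] at key
  simpa only [real_inner_comm g] using key.symm

theorem lt_inner_of_mem_interior {s : Set V} {p g : V} {r : ℝ} (hs : s ⊆ {v | r ≤ ⟪v, g⟫})
    (hp : p ∈ interior s) (hg : g ≠ 0) : r < ⟪p, g⟫ := by
  simpa [interior_setOf_le_inner hg] using interior_mono hs hp

theorem notMem_interior_setOf_le_inner_iff {p x g : V} {r : ℝ}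
    (hp : p ∈ interior {v : V | r ≤ ⟪v, g⟫}) (hx : r ≤ ⟪x, g⟫) :
    x ∉ interior {v : V | r ≤ ⟪v, g⟫} ↔ r < ⟪p, g⟫ ∧ ⟪x, g⟫ = r := by
  rcases eq_or_ne g 0 with rfl | hg
  · have hr : r ≤ 0 := by simpa using interior_subset hp
    simpa [hr] using fun h : r < 0 => h.ne'
  · rw [interior_setOf_le_inner hg] at hp ⊢
    simp only [mem_ofPred_eq, not_lt] at hp ⊢
    exact ⟨fun h => ⟨hp, le_antisymm h hx⟩, fun h => h.2.le⟩

section Polyhedron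

variable {I : Type*} (ν : I → V) (d : I → ℝ) (p : V)

def polyhedron : Set V := ⋂ i, {x | d i ≤ ⟪x, ν i⟫}

def farBoundary : Set V := {x ∈ polyhedron ν d | ∃ i, d i < ⟪p, ν i⟫ ∧ ⟪x, ν i⟫ = d i}

variable {ν d p}

theorem mem_polyhedron {x : V} : x ∈ polyhedron ν d ↔ ∀ i, d i ≤ ⟪x, ν i⟫ := mem_iInter

variable (ν d) in
theorem isClosed_polyhedron : IsClosed (polyhedron ν d) :=
  isClosed_iInter fun _ => isClosed_le continuous_const (by fun_prop)

variable (ν d) in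
theorem convex_polyhedron : Convex ℝ (polyhedron ν d) :=
  convex_iInter fun i => convex_halfSpace_ge
    ⟨fun x y => inner_add_left x y (ν i), fun c x => real_inner_smul_left x (ν i) c⟩ (d i)

theorem farBoundary_subset : farBoundary ν d p ⊆ polyhedron ν d := fun _ hx => hx.1

theorem farBoundary_eq_frontier [Finite I] (hp : p ∈ interior (polyhedron ν d)) :
    farBoundary ν d p = frontier (polyhedron ν d) := by
  ext x
  rw [(isClosed_polyhedron ν d).frontier_eq, polyhedron, interior_iInter_of_finite, mem_sdiff,
    mem_iInter (s := fun i => interior _), not_forall]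
  refine and_congr_right fun hx => exists_congr fun i => ?_
  rw [notMem_interior_setOf_le_inner_iff (interior_mono (iInter_subset _ i) hp)
    (mem_iInter.1 hx i)]

theorem exists_inner_lt_of_notMem (hQ : IsCompact (polyhedron ν d)) (hp : p ∉ polyhedron ν d)
    {x : V} (hx : x ∈ polyhedron ν d) : ∃ i, ⟪x, ν i⟫ < ⟪p, ν i⟫ := by
  by_contra! h
  have hstable : ∀ y ∈ polyhedron ν d, y + (x - p) ∈ polyhedron ν d := fun y hy =>
    mem_polyhedron.2 fun i => by
      rw [inner_add_left, inner_sub_left]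
      linarith [mem_polyhedron.1 hy i, h i]
  exact hp (sub_eq_zero.1 (hQ.eq_zero_of_forall_add_mem ⟨x, hx⟩ hstable) ▸ hx)

end Polyhedron

noncomputable section RadialProjection

variable {I : Type*} [Fintype I] (ν : I → V) (d : I → ℝ) (p : V)

def farFacets : Finset I := {i | d i < ⟪p, ν i⟫}

/-- The ray `t ↦ p + t • (x - p)` leaves `polyhedron ν d` at `t = (exitRate ν d p h x)⁻¹`,
through the facet attaining the maximum. -/
def exitRate (h : (farFacets ν d p).Nonempty) (x : V) : ℝ :=
  (farFacets ν d p).sup' h fun i => ⟪p - x, ν i⟫ / (⟪p, ν i⟫ - d i)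

def radialProjection (h : (farFacets ν d p).Nonempty) (x : V) : V :=
  p + (exitRate ν d p h x)⁻¹ • (x - p)

variable {ν d p} (h : (farFacets ν d p).Nonempty) {x : V}

theorem mem_farFacets {i : I} : i ∈ farFacets ν d p ↔ d i < ⟪p, ν i⟫ := by
  simp [farFacets]

theorem farFacets_nonempty (hQ : IsCompact (polyhedron ν d)) (hp : p ∉ polyhedron ν d)
    (hx : x ∈ polyhedron ν d) : (farFacets ν d p).Nonempty := by
  obtain ⟨i, hi⟩ := exists_inner_lt_of_notMem hQ hp hx
  exact ⟨i, mem_farFacets.2 ((mem_polyhedron.1 hx i).trans_lt hi)⟩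

theorem le_exitRate {i : I} (hi : i ∈ farFacets ν d p) :
    ⟪p - x, ν i⟫ / (⟪p, ν i⟫ - d i) ≤ exitRate ν d p h x :=
  Finset.le_sup' (fun i => ⟪p - x, ν i⟫ / (⟪p, ν i⟫ - d i)) hi

theorem exitRate_pos (hQ : IsCompact (polyhedron ν d)) (hp : p ∉ polyhedron ν d)
    (hx : x ∈ polyhedron ν d) : 0 < exitRate ν d p h x := by
  obtain ⟨i, hi⟩ := exists_inner_lt_of_notMem hQ hp hx
  have hdi : d i < ⟪p, ν i⟫ := (mem_polyhedron.1 hx i).trans_lt hi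
  refine lt_of_lt_of_le ?_ (le_exitRate h (mem_farFacets.2 hdi))
  rw [inner_sub_left]
  exact div_pos (sub_pos.2 hi) (sub_pos.2 hdi)

theorem exitRate_le_one (hx : x ∈ polyhedron ν d) : exitRate ν d p h x ≤ 1 :=
  Finset.sup'_le _ _ fun i hi => by
    rw [div_le_one (sub_pos.2 (mem_farFacets.1 hi)), inner_sub_left]
    linarith [mem_polyhedron.1 hx i]

theorem exitRate_eq_one (hx : x ∈ farBoundary ν d p) : exitRate ν d p h x = 1 := by
  obtain ⟨hxQ, i, hi, hxi⟩ := hx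
  refine le_antisymm (exitRate_le_one h hxQ) ?_
  have := le_exitRate (x := x) h (mem_farFacets.2 hi)
  rwa [inner_sub_left, hxi, div_self (sub_pos.2 hi).ne'] at this

theorem inner_radialProjection (i : I) :
    ⟪radialProjection ν d p h x, ν i⟫ = ⟪p, ν i⟫ - (exitRate ν d p h x)⁻¹ * ⟪p - x, ν i⟫ := by
  rw [radialProjection, inner_add_left, real_inner_smul_left, ← neg_sub p x, inner_neg_left]
  ring

theorem radialProjection_mem_polyhedron (hQ : IsCompact (polyhedron ν d))
    (hp : p ∉ polyhedron ν d) (hx : x ∈ polyhedron ν d) :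
    radialProjection ν d p h x ∈ polyhedron ν d := by
  have hpos := exitRate_pos h hQ hp hx
  refine mem_polyhedron.2 fun i => ?_
  rw [inner_radialProjection]
  by_cases hi : d i < ⟪p, ν i⟫
  · have := le_exitRate (x := x) h (mem_farFacets.2 hi)
    rw [div_le_iff₀ (sub_pos.2 hi), ← inv_mul_le_iff₀ hpos] at this
    linarith
  · have hinv : 1 ≤ (exitRate ν d p h x)⁻¹ := one_le_inv₀ hpos |>.2 (exitRate_le_one h hx)
    have hxi : ⟪p - x, ν i⟫ ≤ 0 := by
      rw [inner_sub_left]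
      linarith [mem_polyhedron.1 hx i]
    nlinarith [mul_nonneg (sub_nonneg.2 hinv) (neg_nonneg.2 hxi), inner_sub_left (𝕜 := ℝ) p x (ν i),
      mem_polyhedron.1 hx i]

theorem radialProjection_mem_farBoundary (hQ : IsCompact (polyhedron ν d))
    (hp : p ∉ polyhedron ν d) (hx : x ∈ polyhedron ν d) :
    radialProjection ν d p h x ∈ farBoundary ν d p := by
  refine ⟨radialProjection_mem_polyhedron h hQ hp hx, ?_⟩
  obtain ⟨i, hi, hmax⟩ := Finset.exists_mem_eq_sup' h fun i => ⟪p - x, ν i⟫ / (⟪p, ν i⟫ - d i)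
  have hdi := mem_farFacets.1 hi
  refine ⟨i, hdi, ?_⟩
  have hrate : exitRate ν d p h x = ⟪p - x, ν i⟫ / (⟪p, ν i⟫ - d i) := hmax
  have hne : ⟪p - x, ν i⟫ ≠ 0 := fun h0 => by
    simpa [hrate, h0] using (exitRate_pos h hQ hp hx).ne'
  rw [inner_radialProjection, hrate, inv_div, div_mul_cancel₀ _ hne]
  ring

theorem radialProjection_eq_self (hx : x ∈ farBoundary ν d p) :
    radialProjection ν d p h x = x := by
  rw [radialProjection, exitRate_eq_one h hx, inv_one, one_smul, add_sub_cancel]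

theorem continuousOn_radialProjection (hQ : IsCompact (polyhedron ν d))
    (hp : p ∉ polyhedron ν d) : ContinuousOn (radialProjection ν d p h) (polyhedron ν d) := by
  have hrate : Continuous (exitRate ν d p h) :=
    Continuous.finset_sup'_apply h fun i _ => by fun_prop
  exact continuousOn_const.add ((hrate.continuousOn.inv₀ fun x hx =>
    (exitRate_pos h hQ hp hx).ne').smul (continuousOn_id.sub continuousOn_const))

variable (ν d p) in
theorem isStrongDeformationRetract_farBoundary (hQ : IsCompact (polyhedron ν d))
    (hp : p ∉ polyhedron ν d) :
    IsStrongDeformationRetract (farBoundary ν d p) (polyhedron ν d) := by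
  rcases (polyhedron ν d).eq_empty_or_nonempty with hempty | ⟨x, hx⟩
  · refine (convex_polyhedron ν d).isStrongDeformationRetract continuousOn_id ?_
      farBoundary_subset fun _ _ => rfl
    rw [hempty]
    exact mapsTo_empty _ _
  · have h := farFacets_nonempty hQ hp hx
    exact (convex_polyhedron ν d).isStrongDeformationRetract
      (continuousOn_radialProjection h hQ hp) (fun y => radialProjection_mem_farBoundary h hQ hp)
      farBoundary_subset fun y => radialProjection_eq_self h

end RadialProjection

noncomputable section Chamber

variable {ι : Type*} (w : ι → V) (c : ι → ℝ) {u : A → V} {b : A → ℝ}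

theorem mem_chamber_iff {P : Set V} {J : Set A} {v : V} :
    v ∈ chamber P u b J ↔
      v ∈ P ∧ (∀ α ∈ J, b α ≤ ⟪v, u α⟫) ∧ (∀ α ∉ J, ⟪v, u α⟫ ≤ b α) := by
  simp [chamber, Hplus, Hminus, mem_iInter, and_assoc]

theorem exists_mem_interior_notMem_chamber {P : Set V} {J : Set A}
    (hcentral : (interior (chamber P u b univ)).Nonempty)
    (hne : chamber P u b J ≠ chamber P u b univ) :
    ∃ p ∈ interior (chamber P u b univ), p ∉ chamber P u b J := by
  by_contra! h
  obtain ⟨p, hp⟩ := hcentral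
  have htrivial : ∀ α ∉ J, u α = 0 ∧ b α = 0 := by
    intro α hα
    have hplus : ∀ v ∈ chamber P u b univ, b α ≤ ⟪v, u α⟫ := fun v hv =>
      (mem_chamber_iff.1 hv).2.1 α (mem_univ α)
    have hminus : ⟪p, u α⟫ ≤ b α := (mem_chamber_iff.1 (h p hp)).2.2 α hα
    have hu : u α = 0 := by
      by_contra hu
      exact (lt_inner_of_mem_interior hplus hp hu).not_ge hminus
    have hp' := hplus p (interior_subset hp)
    simp only [hu, inner_zero_right] at hp' hminus
    exact ⟨hu, le_antisymm hp' hminus⟩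
  refine hne (ext fun v => ?_)
  simp only [mem_chamber_iff, mem_univ, forall_const, not_true_eq_false, IsEmpty.forall_iff,
    implies_true, and_true]
  refine and_congr_right fun _ => ⟨fun hv α => ?_, fun hv => ⟨fun α _ => hv α, fun α hα => ?_⟩⟩
  · by_cases hα : α ∈ J
    · exact hv.1 α hα
    · simp [htrivial α hα]
  · simp [htrivial α hα]

variable (u b) (J : Set A)

open Classical in
def chamberNormal : ι ⊕ A → V := Sum.elim w fun α => if α ∈ J then u α else -u α

open Classical in
def chamberOffset : ι ⊕ A → ℝ := Sum.elim c fun α => if α ∈ J then b α else -b α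

theorem chamber_eq_polyhedron :
    chamber (polyhedron w c) u b J = polyhedron (chamberNormal w u J) (chamberOffset c b J) := by
  ext x
  simp only [mem_chamber_iff, mem_polyhedron, Sum.forall, chamberNormal, chamberOffset,
    Sum.elim_inl, Sum.elim_inr]
  refine and_congr_right fun _ => ?_
  rw [← forall_and]
  refine forall_congr' fun α => ?_
  by_cases hα : α ∈ J <;> simp [hα]

variable {w c u b J}

theorem posBoundary_eq_farBoundary [Finite ι] {p : V}
    (hp : p ∈ interior (chamber (polyhedron w c) u b univ))
    (hJ : ∀ α ∈ J, u α = 0 → b α ≠ 0) :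
    posBoundary (polyhedron w c) u b J =
      farBoundary (chamberNormal w u J) (chamberOffset c b J) p := by
  have hpP : p ∈ interior (polyhedron w c) :=
    interior_mono (fun v hv => (mem_chamber_iff.1 hv).1) hp
  have hplus : ∀ α, ∀ v ∈ chamber (polyhedron w c) u b univ, b α ≤ ⟪v, u α⟫ := fun α v hv =>
    (mem_chamber_iff.1 hv).2.1 α (mem_univ α)
  ext x
  rw [posBoundary, ← farBoundary_eq_frontier hpP, farBoundary, farBoundary, ← chamber_eq_polyhedron]
  refine and_congr_right fun hx => ?_
  rw [Sum.exists, mem_union, mem_iUnion₂]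
  refine or_congr (and_iff_right (mem_chamber_iff.1 hx).1) (exists_congr fun α => ?_)
  by_cases hα : α ∈ J
  · simp only [chamberNormal, chamberOffset, Sum.elim_inr, if_pos hα, exists_prop_of_true hα]
    refine ⟨fun hxα => ⟨lt_inner_of_mem_interior (hplus α) hp fun hu => ?_, hxα⟩, And.right⟩
    exact hJ α hα hu (by simpa [Hyperplane, hu, eq_comm] using hxα)
  · simp only [chamberNormal, chamberOffset, Sum.elim_inr, if_neg hα, exists_prop_of_false hα]
    rw [inner_neg_right, neg_lt_neg_iff, false_iff, not_and]
    exact fun h => ((hplus α p (interior_subset hp)).not_gt h).elim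

end Chamber

theorem posBoundary_deformation_retract_general
    [Fintype A] (u : A → V) (b : A → ℝ)
    (P : Set V)
    -- `P` is a polyhedron: a finite intersection of closed halfspaces
    (hP : ∃ (n : ℕ) (w : Fin n → V) (c : Fin n → ℝ),
      P = ⋂ i, {v : V | c i ≤ ⟪v, w i⟫})
    -- the central chamber `P⁺ = P_𝒜` has nonempty interior
    (hcentral : (interior (chamber P u b (univ : Set A))).Nonempty)
    (J : Set A)
    -- `P_J` is a chamber (full-dimensional), compact, and not the central chamber
    (hcpt : IsCompact (chamber P u b J))
    (hne : chamber P u b J ≠ chamber P u b (univ : Set A)) :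
    ∃ H : unitInterval × V → V,
      ContinuousOn H ((univ : Set unitInterval) ×ˢ chamber P u b J) ∧
      (∀ v ∈ chamber P u b J, H (0, v) = v) ∧
      (∀ t : unitInterval, ∀ v ∈ chamber P u b J, H (t, v) ∈ chamber P u b J) ∧
      (∀ v ∈ chamber P u b J, H (1, v) ∈ posBoundary P u b J) ∧
      (∀ t : unitInterval, ∀ w ∈ posBoundary P u b J, H (t, w) = w) := by
  obtain ⟨n, w, c, hP⟩ := hP
  replace hP : P = polyhedron w c := hP
  subst hP
  by_cases htrivial : ∃ α ∈ J, u α = 0 ∧ b α = 0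
  · obtain ⟨α, hα, hu, hb⟩ := htrivial
    have hall : posBoundary (polyhedron w c) u b J = chamber (polyhedron w c) u b J :=
      inter_eq_left.2 fun x _ => Or.inr (mem_biUnion hα (by simp [Hyperplane, hu, hb]))
    rw [hall, chamber_eq_polyhedron]
    exact (convex_polyhedron _ _).isStrongDeformationRetract continuousOn_id (mapsTo_id _)
      subset_rfl fun _ _ => rfl
  push Not at htrivial
  obtain ⟨p, hp, hpJ⟩ := exists_mem_interior_notMem_chamber hcentral hne
  rw [posBoundary_eq_farBoundary hp htrivial]
  rw [chamber_eq_polyhedron] at hcpt hpJ ⊢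
  exact isStrongDeformationRetract_farBoundary _ _ p hcpt hpJ

/-- If the directed chamber decomposition admits a central chamber
(`P⁺ = P_𝒜` has nonempty interior), then for every compact full-dimensional
chamber `P_J` other than the central one, the positive boundary `∂⁺P_J` is a
strong deformation retract of `P_J`. -/
theorem posBoundary_deformation_retract
    [FiniteDimensional ℝ V] [Fintype A] (u : A → V) (b : A → ℝ)
    (P : Set V)
    -- `P` is a polyhedron: a finite intersection of closed halfspaces
    (hP : ∃ (n : ℕ) (w : Fin n → V) (c : Fin n → ℝ),
      P = ⋂ i, {v : V | c i ≤ ⟪v, w i⟫})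
    -- the central chamber `P⁺ = P_𝒜` has nonempty interior
    (hcentral : (interior (chamber P u b (univ : Set A))).Nonempty)
    (J : Set A)
    -- `P_J` is a chamber (full-dimensional), compact, and not the central chamber
    (hfull : (interior (chamber P u b J)).Nonempty)
    (hcpt : IsCompact (chamber P u b J))
    (hne : chamber P u b J ≠ chamber P u b (univ : Set A)) :
    ∃ H : unitInterval × V → V,
      ContinuousOn H ((univ : Set unitInterval) ×ˢ chamber P u b J) ∧
      (∀ v ∈ chamber P u b J, H (0, v) = v) ∧
      (∀ t : unitInterval, ∀ v ∈ chamber P u b J, H (t, v) ∈ chamber P u b J) ∧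
      (∀ v ∈ chamber P u b J, H (1, v) ∈ posBoundary P u b J) ∧
      (∀ t : unitInterval, ∀ w ∈ posBoundary P u b J, H (t, w) = w) :=
  posBoundary_deformation_retract_general u b P hP hcentral J hcpt hne
end

section
/- Fix integers k ≥ 1 and m ≥ 0. Let D⁺ = {u ∈ ℝᵏ : |u| ≤ 1, u_k ≥ 0}, let S⁺ = {u ∈ ℝᵏ : |u| = 1, u_k ≥ 0}, and let Sᵐ be the unit sphere in ℝ^{m+1}. Consider the equivalence relation ∼ on D⁺ × Sᵐ generated by (u, y) ∼ (u, y′) for all u ∈ S⁺ and y, y′ ∈ Sᵐ. Then the map sending the class of (u, y) to (u₁, √(1 − |u|²)·y) ∈ ℝ^{k−1} × ℝ^{m+1} = ℝ^{k+m} (where u₁ ∈ ℝ^{k−1} denotes the first k−1 coordinates of u) is a well-defined homeomorphism from the quotient space (D⁺ × Sᵐ)/∼ onto the closed unit ball D^{k+m} ⊆ ℝ^{k+m}, and it carries the image of {u ∈ D⁺ : u_k = 0} × Sᵐ in the quotient onto the boundary sphere S^{k+m−1} = {z ∈ ℝ^{k+m} : |z| = 1}. -/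
/-!
Write `u ∈ D⁺` as `(v, t)` with `v = u₁` and `t = u_k ≥ 0`. Since `|u|² = |v|² + t²`, the point
`(v, √(1 - |u|²) y)` has squared norm `1 - t²`: it lies in the ball, and on its boundary sphere
exactly when `t = 0`. Conversely `z = (v, w)` in the ball is hit by `t = √(1 - |z|²)` and
`y = w / |w|` (any unit `y` if `w = 0`), and `z` determines `v`, `t`, and also `y` unless
`|u| = 1`: the map identifies exactly the points identified by `∼`. A continuous bijection from
the compact quotient onto the Hausdorff ball is a homeomorphism.
-/

open Metric Set

noncomputable section

theorem exists_quot_homeomorph_of_continuous_surjective {X Y : Type*} [TopologicalSpace X]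
    [CompactSpace X] [TopologicalSpace Y] [T2Space Y] {r : X → X → Prop} {g : X → Y}
    (hg : Continuous g) (hsurj : Function.Surjective g) (hresp : ∀ p q, r p q → g p = g q)
    (hfib : ∀ p q, g p = g q → Quot.mk r p = Quot.mk r q) :
    ∃ φ : Quot r ≃ₜ Y, ∀ p, φ (Quot.mk r p) = g p := by
  have hinj : Function.Injective (Quot.lift g hresp) := by
    rintro ⟨p⟩ ⟨q⟩
    exact hfib p q
  have hsurj' : Function.Surjective (Quot.lift g hresp) :=
    Function.Surjective.of_comp (g := Quot.mk r) hsurj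
  have hcont : Continuous (Equiv.ofBijective _ ⟨hinj, hsurj'⟩) := continuous_quot_lift hresp hg
  exact ⟨hcont.homeoOfEquivCompactToT2, fun _ => rfl⟩

section UnitVector

variable {F : Type*} [NormedAddCommGroup F] [NormedSpace ℝ F]

theorem exists_norm_eq_one_and_norm_smul_eq [Nontrivial F] (w : F) :
    ∃ y : F, ‖y‖ = 1 ∧ ‖w‖ • y = w := by
  by_cases hw : w = 0
  · obtain ⟨y, hy⟩ := exists_norm_eq F zero_le_one
    exact ⟨y, hy, by simp [hw]⟩
  · exact ⟨‖w‖⁻¹ • w, norm_smul_inv_norm hw, smul_inv_smul₀ (norm_ne_zero_iff.2 hw) w⟩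

theorem eq_and_of_smul_eq_smul_of_norm_eq_one {a b : ℝ} {y y' : F} (ha : 0 ≤ a) (hb : 0 ≤ b)
    (hy : ‖y‖ = 1) (hy' : ‖y'‖ = 1) (h : a • y = b • y') : a = b ∧ (a = 0 ∨ y = y') := by
  have hab : a = b := by
    simpa [norm_smul, hy, hy', abs_of_nonneg ha, abs_of_nonneg hb] using congrArg norm h
  subst hab
  exact ⟨rfl, or_iff_not_imp_left.2 fun ha0 => smul_right_injective F ha0 h⟩

end UnitVector

section DropLast

variable {k : ℕ} {last : Fin k}

def dropLast (u : EuclideanSpace ℝ (Fin k)) : EuclideanSpace ℝ (Fin (k - 1)) :=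
  WithLp.toLp 2 fun i => u ⟨i, by omega⟩

@[fun_prop]
theorem continuous_dropLast : Continuous (dropLast (k := k)) := by
  unfold dropLast; fun_prop

theorem norm_sq_eq_norm_dropLast_sq_add_sq (hlast : (last : ℕ) = k - 1)
    (u : EuclideanSpace ℝ (Fin k)) : ‖u‖ ^ 2 = ‖dropLast u‖ ^ 2 + u last ^ 2 := by
  obtain ⟨n, rfl⟩ : ∃ n, k = n + 1 := ⟨k - 1, by omega⟩
  obtain rfl : last = Fin.last n := Fin.ext (by simpa using hlast)
  simp only [EuclideanSpace.norm_sq_eq, Real.norm_eq_abs, sq_abs, Fin.sum_univ_castSucc]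
  rfl

theorem eq_of_dropLast_eq (hlast : (last : ℕ) = k - 1) {u u' : EuclideanSpace ℝ (Fin k)}
    (h : dropLast u = dropLast u') (hl : u last = u' last) : u = u' := by
  ext i
  by_cases hi : (i : ℕ) < k - 1
  · exact congrArg (fun v : EuclideanSpace ℝ (Fin (k - 1)) => v ⟨i, hi⟩) h
  · obtain rfl : i = last := Fin.ext (by omega)
    exact hl

theorem exists_dropLast_eq (hlast : (last : ℕ) = k - 1) (v : EuclideanSpace ℝ (Fin (k - 1)))
    (t : ℝ) : ∃ u : EuclideanSpace ℝ (Fin k), dropLast u = v ∧ u last = t := by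
  refine ⟨WithLp.toLp 2 fun i => if h : (i : ℕ) < k - 1 then v ⟨i, h⟩ else t, ?_, ?_⟩
  · ext i
    simp [dropLast]
  · simp [hlast]

end DropLast

abbrev halfDisc {ι : Type*} [Fintype ι] (i : ι) : Set (EuclideanSpace ℝ ι) :=
  {u | ‖u‖ ≤ 1 ∧ 0 ≤ u i}

theorem isCompact_halfDisc {ι : Type*} [Fintype ι] (i : ι) : IsCompact (halfDisc i) := by
  refine (isCompact_closedBall 0 1).of_isClosed_subset ?_ fun _ hu => mem_closedBall_zero_iff.2 hu.1
  exact (isClosed_le continuous_norm continuous_const).inter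
    (isClosed_le continuous_const (PiLp.continuous_apply 2 _ i))

section HalfDiscMap

variable {k : ℕ} {last : Fin k} {F : Type*} [NormedAddCommGroup F] [NormedSpace ℝ F]

def halfDiscMap (u : EuclideanSpace ℝ (Fin k)) (y : F) :
    WithLp 2 (EuclideanSpace ℝ (Fin (k - 1)) × F) :=
  WithLp.toLp 2 (dropLast u, √(1 - ‖u‖ ^ 2) • y)

@[fun_prop]
theorem Continuous.halfDiscMap {X : Type*} [TopologicalSpace X] {u : X → EuclideanSpace ℝ (Fin k)}
    {y : X → F} (hu : Continuous u) (hy : Continuous y) :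
    Continuous fun x => halfDiscMap (u x) (y x) := by
  unfold _root_.halfDiscMap
  fun_prop

theorem halfDiscMap_eq_of_norm_eq_one {u : EuclideanSpace ℝ (Fin k)} (hu : ‖u‖ = 1) (y y' : F) :
    halfDiscMap u y = halfDiscMap u y' := by
  simp [halfDiscMap, hu]

theorem norm_halfDiscMap_sq (hlast : (last : ℕ) = k - 1) {u : EuclideanSpace ℝ (Fin k)} {y : F}
    (hu : ‖u‖ ≤ 1) (hy : ‖y‖ = 1) : ‖halfDiscMap u y‖ ^ 2 = 1 - u last ^ 2 := by
  have h0 : 0 ≤ 1 - ‖u‖ ^ 2 := by nlinarith [norm_nonneg u]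
  rw [halfDiscMap, WithLp.prod_norm_sq_eq_of_L2, WithLp.toLp_fst, WithLp.toLp_snd, norm_smul,
    Real.norm_of_nonneg (Real.sqrt_nonneg _), hy, mul_one, Real.sq_sqrt h0,
    norm_sq_eq_norm_dropLast_sq_add_sq hlast u]
  ring

theorem norm_halfDiscMap_le_one (hlast : (last : ℕ) = k - 1) {u : EuclideanSpace ℝ (Fin k)}
    {y : F} (hu : ‖u‖ ≤ 1) (hy : ‖y‖ = 1) : ‖halfDiscMap u y‖ ≤ 1 := by
  have := norm_halfDiscMap_sq hlast hu hy
  nlinarith [norm_nonneg (halfDiscMap u y), sq_nonneg (u last)]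

theorem eq_and_of_halfDiscMap_eq (hlast : (last : ℕ) = k - 1) {u u' : EuclideanSpace ℝ (Fin k)}
    {y y' : F} (hu : u ∈ halfDisc last) (hu' : u' ∈ halfDisc last) (hy : y ∈ sphere 0 1)
    (hy' : y' ∈ sphere 0 1) (h : halfDiscMap u y = halfDiscMap u' y') :
    u = u' ∧ (‖u‖ = 1 ∨ y = y') := by
  obtain ⟨hu, ht⟩ := hu
  obtain ⟨hu', ht'⟩ := hu'
  rw [mem_sphere_zero_iff_norm] at hy hy'
  obtain ⟨hdrop, hsmul⟩ := Prod.mk.inj (congrArg WithLp.ofLp h)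
  obtain ⟨hsqrt, hcases⟩ := eq_and_of_smul_eq_smul_of_norm_eq_one (Real.sqrt_nonneg _)
    (Real.sqrt_nonneg _) hy hy' hsmul
  have hnorm : ‖u‖ ^ 2 = ‖u'‖ ^ 2 := by
    have := (Real.sqrt_inj (by nlinarith [norm_nonneg u]) (by nlinarith [norm_nonneg u'])).1 hsqrt
    linarith
  have hlast_eq : u last = u' last := by
    rw [norm_sq_eq_norm_dropLast_sq_add_sq hlast, norm_sq_eq_norm_dropLast_sq_add_sq hlast u',
      hdrop, add_right_inj] at hnorm
    exact (pow_left_inj₀ ht ht' two_ne_zero).1 hnorm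
  refine ⟨eq_of_dropLast_eq hlast hdrop hlast_eq, hcases.imp_left fun h0 => ?_⟩
  have := Real.sqrt_eq_zero'.1 h0
  nlinarith [norm_nonneg u]

theorem exists_halfDiscMap_eq [Nontrivial F] (hlast : (last : ℕ) = k - 1)
    {z : WithLp 2 (EuclideanSpace ℝ (Fin (k - 1)) × F)} (hz : ‖z‖ ≤ 1) :
    ∃ u ∈ halfDisc last, ∃ y ∈ sphere (0 : F) 1, halfDiscMap u y = z ∧ u last = √(1 - ‖z‖ ^ 2) := by
  obtain ⟨y, hy, hwy⟩ := exists_norm_eq_one_and_norm_smul_eq z.snd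
  obtain ⟨u, hv, ht⟩ := exists_dropLast_eq hlast z.fst √(1 - ‖z‖ ^ 2)
  have hz2 := WithLp.prod_norm_sq_eq_of_L2 z
  have hu2 : ‖u‖ ^ 2 = 1 - ‖z.snd‖ ^ 2 := by
    rw [norm_sq_eq_norm_dropLast_sq_add_sq hlast, hv, ht,
      Real.sq_sqrt (by nlinarith [norm_nonneg z])]
    linarith
  have hsqrt : √(1 - ‖u‖ ^ 2) = ‖z.snd‖ := by
    rw [hu2, sub_sub_cancel, Real.sqrt_sq (norm_nonneg _)]
  refine ⟨u, ⟨?_, ht ▸ Real.sqrt_nonneg _⟩, y, mem_sphere_zero_iff_norm.2 hy, ?_, ht⟩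
  · nlinarith [norm_nonneg u, sq_nonneg ‖z.snd‖]
  · rw [halfDiscMap, hv, hsqrt, hwy]
    rfl

def halfDiscBallMap (hlast : (last : ℕ) = k - 1) (p : halfDisc last × sphere (0 : F) 1) :
    closedBall (0 : WithLp 2 (EuclideanSpace ℝ (Fin (k - 1)) × F)) 1 :=
  ⟨halfDiscMap p.1.1 p.2.1, mem_closedBall_zero_iff.2 <|
    norm_halfDiscMap_le_one hlast p.1.2.1 (mem_sphere_zero_iff_norm.1 p.2.2)⟩

theorem continuous_halfDiscBallMap (hlast : (last : ℕ) = k - 1) :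
    Continuous (halfDiscBallMap (F := F) hlast) := by
  unfold halfDiscBallMap
  fun_prop

theorem surjective_halfDiscBallMap [Nontrivial F] (hlast : (last : ℕ) = k - 1) :
    Function.Surjective (halfDiscBallMap (F := F) hlast) := by
  intro z
  obtain ⟨u, hu, y, hy, hz, -⟩ := exists_halfDiscMap_eq hlast (mem_closedBall_zero_iff.1 z.2)
  exact ⟨(⟨u, hu⟩, ⟨y, hy⟩), Subtype.ext hz⟩

theorem halfDiscBallMap_eq_of_norm_eq_one (hlast : (last : ℕ) = k - 1)
    {p q : halfDisc last × sphere (0 : F) 1}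
    (h : p.1 = q.1) (hp : ‖p.1.1‖ = 1) : halfDiscBallMap hlast p = halfDiscBallMap hlast q := by
  simp only [halfDiscBallMap, ← h]
  exact Subtype.ext (halfDiscMap_eq_of_norm_eq_one hp _ _)

theorem eq_or_of_halfDiscBallMap_eq (hlast : (last : ℕ) = k - 1)
    {p q : halfDisc last × sphere (0 : F) 1}
    (h : halfDiscBallMap hlast p = halfDiscBallMap hlast q) :
    (p.1 = q.1 ∧ ‖p.1.1‖ = 1) ∨ p = q := by
  obtain ⟨hu, hy⟩ :=
    eq_and_of_halfDiscMap_eq hlast p.1.2 q.1.2 p.2.2 q.2.2 (congrArg Subtype.val h)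
  exact hy.imp (⟨Subtype.ext hu, ·⟩) fun hy => Prod.ext (Subtype.ext hu) (Subtype.ext hy)

theorem image_halfDiscMap_eq_sphere [Nontrivial F] (hlast : (last : ℕ) = k - 1) :
    (fun p : halfDisc last × sphere (0 : F) 1 => halfDiscMap p.1.1 p.2.1) '' {p | p.1.1 last = 0} =
      sphere 0 1 := by
  ext z
  rw [mem_sphere_zero_iff_norm]
  constructor
  · rintro ⟨⟨u, y⟩, hu0, rfl⟩
    have := norm_halfDiscMap_sq hlast u.2.1 (mem_sphere_zero_iff_norm.1 y.2)
    rwa [hu0, zero_pow two_ne_zero, sub_zero,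
      pow_eq_one_iff_of_nonneg (norm_nonneg _) two_ne_zero] at this
  · intro hz
    obtain ⟨u, hu, y, hy, rfl, hlast_eq⟩ := exists_halfDiscMap_eq hlast hz.le
    exact ⟨(⟨u, hu⟩, ⟨y, hy⟩), by simp [hlast_eq, hz], rfl⟩

end HalfDiscMap

theorem quotient_halfDisc_sphere_homeo (k m : ℕ)
    (last : Fin k) (hlast : (last : ℕ) = k - 1)
    -- `D⁺ = Dᵏ ∩ H⁺`
    (Dp : Set (EuclideanSpace ℝ (Fin k)))
    (hDp : Dp = {u | ‖u‖ ≤ 1 ∧ 0 ≤ u last})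
    -- the unit sphere `Sᵐ ⊆ ℝ^{m+1}`
    (Sm : Set (EuclideanSpace ℝ (Fin (m + 1))))
    (hSm : Sm = sphere 0 1)
    -- the relation generating the identification: `(u,y) ∼ (u,y')` for `u ∈ S⁺`
    (r : Dp × Sm → Dp × Sm → Prop)
    (hr : ∀ p q, r p q ↔ p.1 = q.1 ∧ ‖(p.1 : EuclideanSpace ℝ (Fin k))‖ = 1)
    -- the map `(u, y) ↦ (u₁, √(1 - |u|²)·y)`
    (f : EuclideanSpace ℝ (Fin k) → EuclideanSpace ℝ (Fin (m + 1)) →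
      WithLp 2 (EuclideanSpace ℝ (Fin (k - 1)) × EuclideanSpace ℝ (Fin (m + 1))))
    (hf : ∀ u y, f u y =
      (WithLp.equiv 2 (EuclideanSpace ℝ (Fin (k - 1)) ×
        EuclideanSpace ℝ (Fin (m + 1)))).symm
        (WithLp.toLp 2 (fun i : Fin (k - 1) => u ⟨(i : ℕ), by omega⟩),
          Real.sqrt (1 - ‖u‖ ^ 2) • y)) :
    ∃ φ : Quot r ≃ₜ
        (closedBall (0 : WithLp 2 (EuclideanSpace ℝ (Fin (k - 1)) ×
          EuclideanSpace ℝ (Fin (m + 1)))) 1),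
      (∀ p : Dp × Sm,
        (φ (Quot.mk r p) : WithLp 2 (EuclideanSpace ℝ (Fin (k - 1)) ×
          EuclideanSpace ℝ (Fin (m + 1)))) = f p.1 p.2) ∧
      Subtype.val '' (φ '' (Quot.mk r ''
          {p : Dp × Sm | (p.1 : EuclideanSpace ℝ (Fin k)) last = 0})) =
        sphere (0 : WithLp 2 (EuclideanSpace ℝ (Fin (k - 1)) ×
          EuclideanSpace ℝ (Fin (m + 1)))) 1 := by
  subst hDp hSm
  obtain rfl : f = halfDiscMap := funext₂ hf
  have : CompactSpace (halfDisc last) := isCompact_iff_compactSpace.1 (isCompact_halfDisc last)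
  obtain ⟨φ, hφ⟩ := exists_quot_homeomorph_of_continuous_surjective (r := r)
    (continuous_halfDiscBallMap hlast) (surjective_halfDiscBallMap hlast)
    (fun p q hpq => ((hr p q).1 hpq).elim (halfDiscBallMap_eq_of_norm_eq_one hlast))
    (fun p q h => (eq_or_of_halfDiscBallMap_eq hlast h).elim (Quot.sound <| (hr p q).2 ·)
      (congrArg _))
  refine ⟨φ, fun p => congrArg Subtype.val (hφ p), ?_⟩
  rw [image_image, image_image]
  simp only [hφ]
  exact image_halfDiscMap_eq_sphere hlast
end
end
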